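/- arXiv:0811.4513 — 4 statements merged into one kernel-verified Lean document; each statement's English description precedes it below -/
import Mathlib

section
/- Let 𝓛 = {f_λ : λ > 0} where f_λ(x) = 1/(x+λ) on [0,∞), let 𝟙 denote the constant function 1, and let 𝓐 be the closure in the sup-norm of the linear span of 𝓛 ∪ {𝟙}. Then 𝓐 equals the set of continuous functions on [0,∞) which have a (finite) limit at infinity. -/
open Filter NNReal

/-!
The substitution `t = 1 / (x + 1)` identifies `[0, ∞]` with `[0, 1]`: a function with a limit at
infinity becomes a continuous function of `t ∈ [0, 1]`, which Weierstrass approximates uniformly by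
polynomials in `t`, i.e. by polynomials in `f₁`. These lie in `𝓐` because `𝓐` is stable under
multiplication by `f₁`: the resolvent identity `f_λ f_μ = (f_λ - f_μ) / (μ - λ)` handles `λ ≠ μ`,
and `f_λ²` is the limit of `f_λ f_μ` as `μ → λ`. Conversely, having a limit at infinity is
preserved under uniform limits, so these functions form a closed subspace containing `𝓛 ∪ {𝟙}`.
-/

open BoundedContinuousFunction Set Topology
open scoped Polynomial

namespace BoundedContinuousFunction

variable {α β : Type*} [TopologicalSpace α]

theorem isClosed_setOf_cauchy_map [PseudoMetricSpace β] (l : Filter α) :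
    IsClosed {f : α →ᵇ β | Cauchy (map f l)} := by
  refine isClosed_of_closure_subset fun f hf => Metric.cauchy_iff.2 ⟨?_, fun ε hε => ?_⟩
  · obtain ⟨g, hg, -⟩ := Metric.mem_closure_iff.1 hf 1 one_pos
    exact (map_neBot_iff _).2 ((map_neBot_iff _).1 (Metric.cauchy_iff.1 hg).1)
  obtain ⟨g, hg, hfg⟩ := Metric.mem_closure_iff.1 hf (ε / 3) (by positivity)
  obtain ⟨t, ht, hgt⟩ := (Metric.cauchy_iff.1 hg).2 (ε / 3) (by positivity)
  refine ⟨f '' (g ⁻¹' t), image_mem_map ht, ?_⟩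
  rintro _ ⟨x, hx, rfl⟩ _ ⟨y, hy, rfl⟩
  calc dist (f x) (f y) ≤ dist (f x) (g x) + dist (g x) (g y) + dist (g y) (f y) :=
        dist_triangle4 _ _ _ _
    _ < ε / 3 + ε / 3 + ε / 3 := by
        gcongr
        · exact (dist_coe_le_dist x).trans_lt hfg
        · exact hgt _ hx _ hy
        · exact (dist_coe_le_dist y).trans_lt (dist_comm f g ▸ hfg)
    _ = ε := by ring

theorem isClosed_setOf_exists_tendsto [PseudoMetricSpace β]
    [CompleteSpace β] (l : Filter α) [l.NeBot] :
    IsClosed {f : α →ᵇ β | ∃ L, Tendsto f l (𝓝 L)} := by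
  simpa only [cauchy_map_iff_exists_tendsto] using isClosed_setOf_cauchy_map (β := β) l

variable (𝕜 E : Type*) [NormedField 𝕜] [SeminormedAddCommGroup E] [NormedSpace 𝕜 E]

def tendstoSubmodule (l : Filter α) : Submodule 𝕜 (α →ᵇ E) where
  carrier := {f | ∃ L, Tendsto f l (𝓝 L)}
  add_mem' := fun ⟨L, hf⟩ ⟨M, hg⟩ => ⟨L + M, hf.add hg⟩
  zero_mem' := ⟨0, tendsto_const_nhds⟩
  smul_mem' c _ := fun ⟨L, hf⟩ => ⟨c • L, hf.const_smul c⟩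

variable {𝕜}

theorem aeval_apply (g : α →ᵇ 𝕜) (p : 𝕜[X]) (x : α) :
    Polynomial.aeval g p x = p.eval (g x) := by
  rw [← coe_toContinuousMapₐ 𝕜 (Polynomial.aeval g p), ← Polynomial.aeval_algHom_apply,
    Polynomial.aeval_continuousMap_apply, coe_toContinuousMapₐ]

end BoundedContinuousFunction

theorem continuousOn_Ici_of_tendsto_atTop {E : Type*} [TopologicalSpace E] {f : ℝ≥0 → E}
    (hf : Continuous f) {L : E} (hL : Tendsto f atTop (𝓝 L)) :
    ContinuousOn (fun t : ℝ => if t ≤ 0 then L else f (t⁻¹ - 1).toNNReal) (Ici 0) := by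
  set k : ℝ → E := fun t => if t ≤ 0 then L else f (t⁻¹ - 1).toNNReal
  have hk : ∀ t, 0 < t → k t = f (t⁻¹ - 1).toNNReal := fun t ht => if_neg ht.not_ge
  intro t ht
  rcases (mem_Ici.1 ht).eq_or_lt with rfl | ht
  · have hinv : Tendsto (fun t : ℝ => (t⁻¹ - 1).toNNReal) (𝓝[>] 0) atTop := by
      refine tendsto_real_toNNReal_atTop.comp ?_
      simpa only [sub_eq_add_neg] using
        tendsto_atTop_add_const_right _ (-1) tendsto_inv_nhdsGT_zero
    refine continuousWithinAt_Ioi_iff_Ici.1 ?_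
    rw [ContinuousWithinAt, show k 0 = L from if_pos le_rfl]
    exact (hL.comp hinv).congr' (eventually_nhdsWithin_of_forall fun t ht => (hk t ht).symm)
  · refine ContinuousAt.continuousWithinAt ?_
    refine ContinuousAt.congr ?_ (eventually_of_mem (Ioi_mem_nhds ht) fun s hs => (hk s hs).symm)
    exact hf.continuousAt.comp (continuous_real_toNNReal.continuousAt.comp
      ((continuousAt_inv₀ ht.ne').sub continuousAt_const))

section Resolvents

noncomputable def resolventFun (l : ℝ) (hl : 0 < l) : ℝ≥0 →ᵇ ℝ :=
  ofNormedAddCommGroup (fun x => 1 / ((x : ℝ) + l))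
    (continuous_const.div (by fun_prop) fun x => by positivity) (1 / l) fun x => by
      rw [Real.norm_of_nonneg (by positivity)]
      gcongr
      exact le_add_of_nonneg_left x.2

variable {l m : ℝ} (hl : 0 < l) (hm : 0 < m)

@[simp]
theorem resolventFun_apply (x : ℝ≥0) : resolventFun l hl x = 1 / ((x : ℝ) + l) := rfl

theorem resolventFun_mul_resolventFun (hlm : l ≠ m) :
    resolventFun l hl * resolventFun m hm =
      (m - l)⁻¹ • (resolventFun l hl - resolventFun m hm) := by
  ext x
  have : (x : ℝ) + l ≠ 0 := by positivity
  have : (x : ℝ) + m ≠ 0 := by positivity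
  have : m - l ≠ 0 := sub_ne_zero.2 hlm.symm
  simp only [BoundedContinuousFunction.coe_mul, BoundedContinuousFunction.coe_smul,
    BoundedContinuousFunction.coe_sub, Pi.mul_apply, Pi.sub_apply,
    resolventFun_apply, smul_eq_mul]
  field_simp
  ring

theorem dist_resolventFun_le :
    dist (resolventFun l hl) (resolventFun m hm) ≤ |l - m| / (l * m) := by
  refine (dist_le (by positivity)).2 fun x => ?_
  have hx : (0 : ℝ) ≤ x := x.2
  have hxl : (0 : ℝ) < x + l := by positivity
  have hxm : (0 : ℝ) < x + m := by positivity
  rw [resolventFun_apply, resolventFun_apply, Real.dist_eq, div_sub_div _ _ hxl.ne' hxm.ne',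
    abs_div, abs_of_pos (mul_pos hxl hxm), show 1 * ((x : ℝ) + m) - (x + l) * 1 = m - l by ring,
    abs_sub_comm]
  gcongr <;> linarith

theorem tendsto_resolventFun_atTop : Tendsto (resolventFun l hl) atTop (𝓝 0) := by
  refine (tendsto_inv_atTop_zero.comp (tendsto_atTop_add_const_right _ l
    (NNReal.tendsto_coe_atTop.2 tendsto_id))).congr fun x => ?_
  simp [one_div]

def resolventGenerators : Set (ℝ≥0 →ᵇ ℝ) :=
  {f | (∃ l : ℝ, 0 < l ∧ ∀ x : ℝ≥0, f x = 1 / ((x : ℝ) + l)) ∨ (∀ x : ℝ≥0, f x = 1)}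

theorem mem_resolventGenerators {f : ℝ≥0 →ᵇ ℝ} :
    f ∈ resolventGenerators ↔ (∃ l hl, f = resolventFun l hl) ∨ f = 1 := by
  simp [resolventGenerators, DFunLike.ext_iff]

noncomputable def resolventSpan : Submodule ℝ (ℝ≥0 →ᵇ ℝ) :=
  Submodule.span ℝ resolventGenerators

theorem resolventFun_mem_resolventSpan : resolventFun l hl ∈ resolventSpan :=
  Submodule.subset_span (mem_resolventGenerators.2 (Or.inl ⟨l, hl, rfl⟩))

theorem one_mem_resolventSpan : 1 ∈ resolventSpan :=
  Submodule.subset_span (mem_resolventGenerators.2 (Or.inr rfl))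

theorem resolventSpan_le_tendstoSubmodule : resolventSpan ≤ tendstoSubmodule ℝ ℝ atTop := by
  refine Submodule.span_le.2 fun f hf => ?_
  rcases mem_resolventGenerators.1 hf with ⟨l, hl, rfl⟩ | rfl
  · exact ⟨0, tendsto_resolventFun_atTop hl⟩
  · exact ⟨1, tendsto_const_nhds⟩

theorem resolventFun_mul_resolventFun_mem_of_ne (hlm : l ≠ m) :
    resolventFun l hl * resolventFun m hm ∈ resolventSpan := by
  rw [resolventFun_mul_resolventFun hl hm hlm]
  exact Submodule.smul_mem _ _ (Submodule.sub_mem _ (resolventFun_mem_resolventSpan hl)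
    (resolventFun_mem_resolventSpan hm))

theorem tendsto_resolventFun_add_inv :
    Tendsto (fun n : ℕ => resolventFun (l + ((n : ℝ) + 1)⁻¹) (by positivity)) atTop
      (𝓝 (resolventFun l hl)) := by
  have hu : Tendsto (fun n : ℕ => l + ((n : ℝ) + 1)⁻¹) atTop (𝓝 l) := by
    simpa [one_div] using tendsto_const_nhds (x := l).add tendsto_one_div_add_atTop_nhds_zero_nat
  have hbound := (hu.sub_const l).abs.div (hu.mul_const l) (by positivity)
  rw [sub_self, abs_zero, zero_div] at hbound
  exact tendsto_iff_dist_tendsto_zero.2 <|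
    squeeze_zero (fun _ => dist_nonneg) (fun n => dist_resolventFun_le _ hl) hbound

theorem resolventFun_mul_resolventFun_mem :
    resolventFun l hl * resolventFun m hm ∈ resolventSpan.topologicalClosure := by
  rcases ne_or_eq l m with hlm | rfl
  · exact resolventSpan.le_topologicalClosure (resolventFun_mul_resolventFun_mem_of_ne hl hm hlm)
  refine resolventSpan.isClosed_topologicalClosure.mem_of_tendsto
    (tendsto_const_nhds.mul (tendsto_resolventFun_add_inv hl)) (Eventually.of_forall fun n => ?_)
  refine resolventSpan.le_topologicalClosure (resolventFun_mul_resolventFun_mem_of_ne _ _ ?_)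
  have : (0 : ℝ) < ((n : ℝ) + 1)⁻¹ := by positivity
  linarith

theorem mul_resolventFun_mem {g : ℝ≥0 →ᵇ ℝ} (hg : g ∈ resolventSpan.topologicalClosure) :
    g * resolventFun m hm ∈ resolventSpan.topologicalClosure := by
  let P := resolventSpan.topologicalClosure.comap (LinearMap.mulRight ℝ (resolventFun m hm))
  have hP : IsClosed (P : Set (ℝ≥0 →ᵇ ℝ)) :=
    resolventSpan.isClosed_topologicalClosure.preimage (continuous_mul_const _)
  refine resolventSpan.topologicalClosure_minimal (Submodule.span_le.2 fun f hf => ?_) hP hg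
  rcases mem_resolventGenerators.1 hf with ⟨l, hl, rfl⟩ | rfl
  · exact resolventFun_mul_resolventFun_mem hl hm
  · show 1 * resolventFun m hm ∈ resolventSpan.topologicalClosure
    rw [one_mul]
    exact resolventSpan.le_topologicalClosure (resolventFun_mem_resolventSpan hm)

theorem aeval_resolventFun_mem (p : ℝ[X]) :
    Polynomial.aeval (resolventFun m hm) p ∈ resolventSpan.topologicalClosure := by
  have hpow (n : ℕ) : resolventFun m hm ^ n ∈ resolventSpan.topologicalClosure := by
    induction n with
    | zero => simpa using resolventSpan.le_topologicalClosure one_mem_resolventSpan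
    | succ n ih => simpa only [pow_succ] using mul_resolventFun_mem hm ih
  induction p using Polynomial.induction_on' with
  | add p q hp hq =>
    rw [map_add]
    exact Submodule.add_mem _ hp hq
  | monomial n a =>
    rw [Polynomial.aeval_monomial, ← Algebra.smul_def]
    exact Submodule.smul_mem _ a (hpow n)

end Resolvents

theorem mem_closure_range_aeval_resolventFun_one {f : ℝ≥0 →ᵇ ℝ} {L : ℝ}
    (hf : Tendsto f atTop (𝓝 L)) :
    f ∈ closure (range fun p : ℝ[X] => Polynomial.aeval (resolventFun 1 one_pos) p) := by
  refine Metric.mem_closure_iff.2 fun ε hε => ?_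
  obtain ⟨p, hp⟩ := exists_polynomial_near_of_continuousOn 0 1 _
    ((continuousOn_Ici_of_tendsto_atTop f.continuous hf).mono Icc_subset_Ici_self) (ε / 2)
    (half_pos hε)
  refine ⟨_, mem_range_self p, ((dist_le (half_pos hε).le).2 fun x => ?_).trans_lt
    (half_lt_self hε)⟩
  have hx : (0 : ℝ) < x + 1 := by positivity
  have ht : 1 / ((x : ℝ) + 1) ∈ Icc 0 1 := ⟨by positivity, (div_le_one hx).2 (by simp)⟩
  specialize hp _ ht
  rw [if_neg (not_le.2 (by positivity)), one_div, inv_inv, add_sub_cancel_right,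
    Real.toNNReal_coe] at hp
  rw [aeval_apply, resolventFun_apply, Real.dist_eq, abs_sub_comm, one_div]
  exact hp.le

/-- Let `𝓛 = {f_λ : λ > 0}` with `f_λ(x) = 1/(x+λ)` on `[0,∞)` (bounded
continuous functions on `ℝ≥0`), let `𝟙` be the constant function one, and let `𝓐` be
the sup-norm closure of the linear span of `𝓛 ∪ {𝟙}`.  Then `𝓐` is exactly the set of
continuous functions on `[0,∞)` having a finite limit at infinity. -/
theorem closure_span_resolvents_eq_converging_functions :
    closure (↑(Submodule.span ℝ
        ({f : BoundedContinuousFunction ℝ≥0 ℝ |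
            (∃ l : ℝ, 0 < l ∧ ∀ x : ℝ≥0, f x = 1 / ((x : ℝ) + l)) ∨
            (∀ x : ℝ≥0, f x = 1)})) : Set (BoundedContinuousFunction ℝ≥0 ℝ))
      = {f : BoundedContinuousFunction ℝ≥0 ℝ | ∃ L : ℝ, Tendsto f atTop (nhds L)} := by
  change closure (resolventSpan : Set (ℝ≥0 →ᵇ ℝ)) = _
  refine subset_antisymm (closure_minimal resolventSpan_le_tendstoSubmodule
    (isClosed_setOf_exists_tendsto atTop)) fun f ⟨L, hf⟩ => ?_
  rw [← Submodule.topologicalClosure_coe]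
  exact closure_minimal (range_subset_iff.2 (aeval_resolventFun_mem one_pos))
    resolventSpan.isClosed_topologicalClosure (mem_closure_range_aeval_resolventFun_one hf)
end

section
/- For each θ = (θ₁,θ₂) ∈ [0,2π)², the 3×3 Hermitian matrix Δ_θ = (1/4)·[[4, -1-e^{-iθ₂}, -e^{-iθ₁}-e^{-iθ₂}], [-1-e^{iθ₂}, 4, -1-e^{-iθ₁}], [-e^{iθ₁}-e^{iθ₂}, -1-e^{iθ₁}, 4]] has characteristic polynomial p(μ) = (μ - 3/2)((μ - 3/4)² - (3+2κ)/16), where κ = cos θ₁ + cos θ₂ + cos(θ₁-θ₂). -/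
open Complex

/-- The Floquet (θ-equivariant) combinatorial Laplacian of the Kagome lattice on a
combinatorial fundamental domain of three vertices. -/
noncomputable def kagomeFloquet (θ₁ θ₂ : ℝ) : Matrix (Fin 3) (Fin 3) ℂ :=
  (1 / 4 : ℂ) •
    !![4, -1 - exp (-I * θ₂), -exp (-I * θ₁) - exp (-I * θ₂);
       -1 - exp (I * θ₂), 4, -1 - exp (-I * θ₁);
       -exp (I * θ₁) - exp (I * θ₂), -1 - exp (I * θ₁), 4]

/-!
Writing `z = e^{iθ₁}`, `w = e^{iθ₂}`, the Laplacian is `Δ_θ = 1 - A/4`, where `A` is the Bloch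
adjacency matrix of the Kagome lattice. A direct `3 × 3` determinant gives
`det (t - A) = (t + 2) ((t - 1)² - (3 + 2κ))`, since `2κ = z + z⁻¹ + w + w⁻¹ + z/w + w/z`:
the flat band `t = -2` of `A` becomes `μ = 3/2`, and the dispersive bands `1 ± √(3 + 2κ)`
become the roots of the quadratic factor under `μ = 1 - t/4`.
-/

section
variable {K : Type*} [Field K]

def kagomeBloch (z w : K) : Matrix (Fin 3) (Fin 3) K :=
  !![0, 1 + w⁻¹, z⁻¹ + w⁻¹;
     1 + w, 0, 1 + z⁻¹;
     z + w, 1 + z, 0]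

theorem det_sub_kagomeBloch {z w : K} (hz : z ≠ 0) (hw : w ≠ 0) (t : K) :
    (t • 1 - kagomeBloch z w).det =
      (t + 2) * ((t - 1) ^ 2 - (3 + ((z + z⁻¹) + (w + w⁻¹) + (z / w + w / z)))) := by
  rw [kagomeBloch, Matrix.one_fin_three, Matrix.det_fin_three]
  simp only [Matrix.smul_of, Matrix.smul_cons, Matrix.smul_empty, Matrix.of_sub_of,
    Matrix.cons_sub_cons, Matrix.empty_sub_empty, Matrix.of_apply, Matrix.cons_val',
    Matrix.cons_val_zero, Matrix.cons_val_one, Matrix.cons_val_two, Matrix.cons_val_fin_one,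
    Matrix.head_cons, Matrix.tail_cons, Matrix.head_fin_const, smul_eq_mul]
  field_simp
  ring

theorem det_smul_one_sub_one_sub_smul {n : Type*} [Fintype n] [DecidableEq n]
    (A : Matrix n n K) {c : K} (hc : c ≠ 0) (μ : K) :
    (μ • 1 - (1 - c • A)).det = (-c) ^ Fintype.card n * (((1 - μ) / c) • 1 - A).det := by
  rw [← Matrix.det_smul, smul_sub, smul_smul]
  congr 1
  field_simp
  module

end

theorem kagomeFloquet_eq (θ₁ θ₂ : ℝ) :
    kagomeFloquet θ₁ θ₂ = 1 - (1 / 4 : ℂ) • kagomeBloch (exp (I * θ₁)) (exp (I * θ₂)) := by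
  rw [kagomeFloquet, kagomeBloch, Matrix.one_fin_three]
  simp only [neg_mul, exp_neg, Matrix.smul_of, Matrix.smul_cons, Matrix.smul_empty, Matrix.of_sub_of,
    Matrix.cons_sub_cons, Matrix.empty_sub_empty, smul_eq_mul]
  ring_nf

theorem two_mul_kagome_kappa (θ₁ θ₂ : ℝ) :
    2 * ((Real.cos θ₁ + Real.cos θ₂ + Real.cos (θ₁ - θ₂) : ℝ) : ℂ) =
      (exp (I * θ₁) + (exp (I * θ₁))⁻¹) + (exp (I * θ₂) + (exp (I * θ₂))⁻¹) +
        (exp (I * θ₁) / exp (I * θ₂) + exp (I * θ₂) / exp (I * θ₁)) := by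
  push_cast
  simp only [mul_add, two_cos, mul_comm _ I, mul_neg, mul_sub, exp_neg, exp_sub]
  field_simp

theorem kagomeFloquet_charpoly_general (θ₁ θ₂ : ℝ) :
    ∀ μ : ℝ,
      Matrix.det ((μ : ℂ) • (1 : Matrix (Fin 3) (Fin 3) ℂ) - kagomeFloquet θ₁ θ₂) =
        ((μ : ℂ) - 3 / 2) *
          (((μ : ℂ) - 3 / 4) ^ 2 -
            (3 + 2 * ((Real.cos θ₁ + Real.cos θ₂ + Real.cos (θ₁ - θ₂) : ℝ) : ℂ)) / 16) := by
  intro μ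
  rw [kagomeFloquet_eq, det_smul_one_sub_one_sub_smul _ (by norm_num),
    det_sub_kagomeBloch (exp_ne_zero _) (exp_ne_zero _), ← two_mul_kagome_kappa, Fintype.card_fin]
  ring

/-- For each `θ ∈ [0,2π)²`, the characteristic polynomial
`p(μ) = det(μ·I - Δ_θ)` of the Kagome Floquet matrix is
`(μ - 3/2)((μ - 3/4)² - (3+2κ)/16)` with `κ = cos θ₁ + cos θ₂ + cos(θ₁-θ₂)`. -/
theorem kagomeFloquet_charpoly (θ₁ θ₂ : ℝ)
    (h₁ : θ₁ ∈ Set.Ico 0 (2 * Real.pi)) (h₂ : θ₂ ∈ Set.Ico 0 (2 * Real.pi)) :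
    ∀ μ : ℝ,
      Matrix.det ((μ : ℂ) • (1 : Matrix (Fin 3) (Fin 3) ℂ) - kagomeFloquet θ₁ θ₂) =
        ((μ : ℂ) - 3 / 2) *
          (((μ : ℂ) - 3 / 4) ^ 2 -
            (3 + 2 * ((Real.cos θ₁ + Real.cos θ₂ + Real.cos (θ₁ - θ₂) : ℝ) : ℂ)) / 16) :=
  kagomeFloquet_charpoly_general θ₁ θ₂
end

section
/- For each θ ∈ [0,2π)², the eigenvalues of the 3×3 Floquet matrix Δ_θ of the Kagome lattice are μ₁ = 3/2 and μ_± = 3/4 ± (1/4)√(3 + 2κ(θ)), where κ(θ) = cos θ₁ + cos θ₂ + cos(θ₁ - θ₂). In particular, 3/2 is an eigenvalue of Δ_θ for every θ. -/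
open Complex

/-!
Substituting `zⱼ = e^{iθⱼ}`, `e^{-iθⱼ} = zⱼ⁻¹` turns `Δ_θ` into a matrix of Laurent polynomials in
`z₁, z₂`, whose characteristic polynomial factors as `(μ - 3/2) (μ² - 3μ/2 + (3 - κ)/8)` because
`z + z⁻¹ = 2 cos θ`. The quadratic factor has discriminant `(3 + 2κ)/16`, and
`3 + 2κ = |1 + e^{iθ₁} + e^{iθ₂}|² ≥ 0`, so its roots are the real numbers `3/4 ± √(3 + 2κ)/4`.
-/

theorem Matrix.spectrum_eq_of_det_scalar_sub_eq {K : Type*} [Field K] {n : Type*} [Fintype n]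
    [DecidableEq n] (A : Matrix n n K) (a b c : K)
    (h : ∀ μ, (Matrix.scalar n μ - A).det = (μ - a) * (μ - b) * (μ - c)) :
    spectrum K A = {a, b, c} := by
  ext μ
  simp only [Matrix.mem_spectrum_iff_isRoot_charpoly, Polynomial.IsRoot.def,
    Matrix.eval_charpoly, h, mul_eq_zero, sub_eq_zero, Set.mem_insert_iff,
    Set.mem_singleton_iff, or_assoc]

noncomputable def kagomeMatrix (z₁ z₂ : ℂ) : Matrix (Fin 3) (Fin 3) ℂ :=
  (1 / 4 : ℂ) • !![4, -1 - z₂⁻¹, -z₁⁻¹ - z₂⁻¹; -1 - z₂, 4, -1 - z₁⁻¹; -z₁ - z₂, -1 - z₁, 4]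

theorem kagomeFloquet_eq_kagomeMatrix (θ₁ θ₂ : ℝ) :
    kagomeFloquet θ₁ θ₂ = kagomeMatrix (exp (θ₁ * I)) (exp (θ₂ * I)) := by
  simp only [kagomeFloquet, kagomeMatrix, neg_mul, ← exp_neg, mul_comm I]

theorem det_scalar_sub_kagomeMatrix {z₁ z₂ : ℂ} (h₁ : z₁ ≠ 0) (h₂ : z₂ ≠ 0) (μ : ℂ) :
    (Matrix.scalar (Fin 3) μ - kagomeMatrix z₁ z₂).det =
      (μ - 3 / 2) * (μ ^ 2 - 3 / 2 * μ +
        (6 - (z₁ + z₁⁻¹) - (z₂ + z₂⁻¹) - (z₁ / z₂ + z₂ / z₁)) / 16) := by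
  simp only [Matrix.det_fin_three, kagomeMatrix, Matrix.sub_apply, Matrix.scalar_apply,
    Matrix.smul_apply, Matrix.of_apply, Matrix.cons_val', Matrix.cons_val_zero, Matrix.cons_val_one,
    Matrix.cons_val, Matrix.cons_val_fin_one, Matrix.diagonal_apply_eq, Matrix.diagonal_apply_ne,
    Fin.reduceEq, ne_eq, not_false_eq_true, smul_eq_mul]
  field_simp
  ring

theorem Complex.exp_ofReal_mul_I_add_inv (θ : ℝ) :
    exp (θ * I) + (exp (θ * I))⁻¹ = 2 * Real.cos θ := by
  rw [← exp_neg, ← neg_mul, ofReal_cos, two_cos]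

theorem Complex.exp_ofReal_mul_I_div_add_div (θ₁ θ₂ : ℝ) :
    exp (θ₁ * I) / exp (θ₂ * I) + exp (θ₂ * I) / exp (θ₁ * I) = 2 * Real.cos (θ₁ - θ₂) := by
  rw [← exp_sub, ← exp_sub, ← sub_mul, ← sub_mul, ← exp_ofReal_mul_I_add_inv, ← exp_neg, ← neg_mul]
  push_cast
  ring_nf

theorem three_add_two_mul_cos_sum_eq_sq_add_sq (θ₁ θ₂ : ℝ) :
    3 + 2 * (Real.cos θ₁ + Real.cos θ₂ + Real.cos (θ₁ - θ₂)) =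
      (1 + Real.cos θ₁ + Real.cos θ₂) ^ 2 + (Real.sin θ₁ + Real.sin θ₂) ^ 2 := by
  rw [Real.cos_sub]
  linear_combination (-1 : ℝ) * Real.sin_sq_add_cos_sq θ₁ - Real.sin_sq_add_cos_sq θ₂

theorem det_scalar_sub_kagomeFloquet {θ₁ θ₂ s : ℝ}
    (hs : s ^ 2 = 3 + 2 * (Real.cos θ₁ + Real.cos θ₂ + Real.cos (θ₁ - θ₂))) (μ : ℂ) :
    (Matrix.scalar (Fin 3) μ - kagomeFloquet θ₁ θ₂).det =
      (μ - 3 / 2) * (μ - ((3 / 4 + s / 4 : ℝ) : ℂ)) * (μ - ((3 / 4 - s / 4 : ℝ) : ℂ)) := by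
  rw [kagomeFloquet_eq_kagomeMatrix, det_scalar_sub_kagomeMatrix (exp_ne_zero _) (exp_ne_zero _),
    exp_ofReal_mul_I_add_inv, exp_ofReal_mul_I_add_inv, exp_ofReal_mul_I_div_add_div]
  have hsC := congrArg ofReal hs
  push_cast at hsC ⊢
  linear_combination (μ - 3 / 2) / 16 * hsC

theorem kagomeFloquet_eigenvalues_general (θ₁ θ₂ : ℝ) :
    spectrum ℂ (kagomeFloquet θ₁ θ₂) =
        {(3 / 2 : ℂ),
         ((3 / 4 + Real.sqrt (3 + 2 * (Real.cos θ₁ + Real.cos θ₂ + Real.cos (θ₁ - θ₂))) / 4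
            : ℝ) : ℂ),
         ((3 / 4 - Real.sqrt (3 + 2 * (Real.cos θ₁ + Real.cos θ₂ + Real.cos (θ₁ - θ₂))) / 4
            : ℝ) : ℂ)} ∧
      (3 / 2 : ℂ) ∈ spectrum ℂ (kagomeFloquet θ₁ θ₂) := by
  have hκ : 0 ≤ 3 + 2 * (Real.cos θ₁ + Real.cos θ₂ + Real.cos (θ₁ - θ₂)) := by
    rw [three_add_two_mul_cos_sum_eq_sq_add_sq]
    positivity
  have hspec := Matrix.spectrum_eq_of_det_scalar_sub_eq _ _ _ _
    (det_scalar_sub_kagomeFloquet (Real.sq_sqrt hκ))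
  exact ⟨hspec, hspec ▸ Set.mem_insert _ _⟩

/-- For each `θ ∈ [0,2π)²`, the eigenvalues of the Kagome Floquet matrix `Δ_θ`
are `3/2` and `3/4 ± (1/4)√(3 + 2κ(θ))`, with `κ(θ) = cos θ₁ + cos θ₂ + cos(θ₁-θ₂)`.
In particular `3/2` is an eigenvalue of `Δ_θ` for every `θ`. -/
theorem kagomeFloquet_eigenvalues (θ₁ θ₂ : ℝ)
    (h₁ : θ₁ ∈ Set.Ico 0 (2 * Real.pi)) (h₂ : θ₂ ∈ Set.Ico 0 (2 * Real.pi)) :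
    spectrum ℂ (kagomeFloquet θ₁ θ₂) =
        {(3 / 2 : ℂ),
         ((3 / 4 + Real.sqrt (3 + 2 * (Real.cos θ₁ + Real.cos θ₂ + Real.cos (θ₁ - θ₂))) / 4
            : ℝ) : ℂ),
         ((3 / 4 - Real.sqrt (3 + 2 * (Real.cos θ₁ + Real.cos θ₂ + Real.cos (θ₁ - θ₂))) / 4
            : ℝ) : ℂ)} ∧
      (3 / 2 : ℂ) ∈ spectrum ℂ (kagomeFloquet θ₁ θ₂) :=
  kagomeFloquet_eigenvalues_general θ₁ θ₂
end

section
/- Let H^{Λ,Dir} and H^Λ be the Dirichlet and Neumann-type restrictions of the quantum graph Schrödinger operator H to a topological subgraph Λ, and H^{Λ',Dir}, H^{Λ'} those on the closure Λ' of the complement. Then in the sense of quadratic forms, H^{Λ,Dir} ⊕ H^{Λ',Dir} ≥ H ≥ H^Λ ⊕ H^{Λ'}, i.e. the form domains are nested (Dirichlet decoupled ⊂ full ⊂ Neumann decoupled) and the quadratic forms satisfy the corresponding inequalities on the smaller domains. -/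
/-!
On the Dirichlet domain the traces vanish on the boundary, so the boundary vertex terms
dropped by the decoupled Dirichlet form are zero. For the Neumann-type form, Cauchy–Schwarz and
`‖R_v‖ ≤ C_R` give `Re ⟨R_v x, x⟩ ≥ -C_R ‖x‖²`, so replacing the boundary vertex terms by
`-C_R ‖f(v)‖²` can only decrease the form.
-/

open Finset

theorem neg_mul_sq_le_re_inner_of_norm_le {𝕜 E : Type*} [RCLike 𝕜] [NormedAddCommGroup E]
    [InnerProductSpace 𝕜 E] {x y : E} {C : ℝ} (h : ‖y‖ ≤ C * ‖x‖) :
    -(C * ‖x‖ ^ 2) ≤ RCLike.re (inner 𝕜 y x) :=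
  calc -(C * ‖x‖ ^ 2) = -(C * ‖x‖ * ‖x‖) := by ring
    _ ≤ -(‖y‖ * ‖x‖) := neg_le_neg (mul_le_mul_of_nonneg_right h (norm_nonneg x))
    _ ≤ -‖inner 𝕜 y x‖ := neg_le_neg (norm_inner_le_norm y x)
    _ ≤ RCLike.re (inner 𝕜 y x) := neg_le_of_abs_le (RCLike.abs_re_le_norm _)

/-- Dirichlet–Neumann bracketing for quantum graph forms.  The quadratic form
of the Schrödinger operator `H` on the metric graph is `h(f) = base(f) + ∑_v ⟨R_v f(v), f(v)⟩`
(with `base(f) = ‖Df‖² + ⟨qf,f⟩`), on the domain of `f` with boundary values `f(v) ∈ 𝒢_v`.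
Decoupling along the boundary `B = ∂Λ = ∂Λ'`:
* the Dirichlet form `h^{Λ,Dir} ⊕ h^{Λ',Dir}` additionally imposes `f(v) = 0` for `v ∈ B`,
* the Neumann-type form `h^Λ ⊕ h^{Λ'}` imposes no condition at `B` and replaces the vertex
  term there by `-C_R ∑_{v∈B} ‖f(v)‖²`.
Then the form domains are nested (Dirichlet decoupled ⊂ full ⊂ Neumann decoupled), on the
Dirichlet domain the decoupled Dirichlet form equals (hence dominates) `h`, and on the full
domain `h` dominates the decoupled Neumann form; i.e.
`H^{Λ,Dir} ⊕ H^{Λ',Dir} ≥ H ≥ H^Λ ⊕ H^{Λ'}` in the sense of quadratic forms. -/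
theorem quantum_graph_bracketing
    (F : Type*) [AddCommGroup F] [Module ℂ F]        -- functions on the metric graph
    (V : Type*) [Fintype V] [DecidableEq V] (B : Finset V)           -- vertices; boundary ∂Λ
    (d : V → ℕ)                                      -- vertex degrees
    (trace : F →ₗ[ℂ] ∀ v, EuclideanSpace ℂ (Fin (d v)))  -- boundary values f ↦ (f(v))_v
    (G : ∀ v, Submodule ℂ (EuclideanSpace ℂ (Fin (d v))))  -- vertex spaces 𝒢_v
    (R : ∀ v, EuclideanSpace ℂ (Fin (d v)) →ₗ[ℂ] EuclideanSpace ℂ (Fin (d v)))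
    (CR : ℝ) (hCR : ∀ v x, ‖R v x‖ ≤ CR * ‖x‖)
    (base : F → ℝ) :
    -- domain nesting: Dirichlet decoupled ⊆ full ⊆ Neumann decoupled
    ({f : F | (∀ v, trace f v ∈ G v) ∧ ∀ v ∈ B, trace f v = 0} ⊆
        {f : F | ∀ v, trace f v ∈ G v}) ∧
    ({f : F | ∀ v, trace f v ∈ G v} ⊆ {f : F | ∀ v ∉ B, trace f v ∈ G v}) ∧
    -- on the Dirichlet domain, the decoupled Dirichlet form dominates (equals) h
    (∀ f : F, (∀ v, trace f v ∈ G v) → (∀ v ∈ B, trace f v = 0) →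
      base f + ∑ v : V, (inner ℂ (R v (trace f v)) (trace f v) : ℂ).re ≤
        base f + ∑ v ∈ Finset.univ \ B, (inner ℂ (R v (trace f v)) (trace f v) : ℂ).re) ∧
    -- on the full domain, h dominates the decoupled Neumann-type form
    (∀ f : F, (∀ v, trace f v ∈ G v) →
      base f + ∑ v ∈ Finset.univ \ B, (inner ℂ (R v (trace f v)) (trace f v) : ℂ).re
          - CR * ∑ v ∈ B, ‖trace f v‖ ^ 2 ≤
        base f + ∑ v : V, (inner ℂ (R v (trace f v)) (trace f v) : ℂ).re) := by
  refine ⟨fun f hf => hf.1, fun f hf v _ => hf v, fun f _ hB => ?_, fun f _ => ?_⟩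
  · have hdrop : ∀ v ∈ univ, v ∉ univ \ B →
        (inner ℂ (R v (trace f v)) (trace f v) : ℂ).re = 0 := fun v _ hv => by
      rw [hB v (by simpa using hv), inner_zero_right, Complex.zero_re]
    rw [sum_subset sdiff_subset hdrop]
  · have hboundary : -(CR * ∑ v ∈ B, ‖trace f v‖ ^ 2) ≤
        ∑ v ∈ B, (inner ℂ (R v (trace f v)) (trace f v) : ℂ).re := by
      rw [mul_sum, ← sum_neg_distrib]
      exact sum_le_sum fun v _ => neg_mul_sq_le_re_inner_of_norm_le (𝕜 := ℂ) (hCR v _)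
    rw [← sum_sdiff (subset_univ B)]
    linarith
end
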